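/- arXiv:1706.01587 — 3 statements merged into one kernel-verified Lean document; each statement's English description precedes it below -/
import Mathlib

section
/- Let M ∈ ℝ^{n×n} be symmetric positive semidefinite with largest eigenvalue λ₁ and corresponding unit eigenvector v₁, let c > 0 and γ₂ > 0. Consider f(l) = (lᵀ M l + c)⁻¹ + γ₂ ‖l‖². If λ₁ ≤ γ₂ c², then l = 0 is a global minimizer of f; otherwise, l* = √(1/√(γ₂ λ₁) − c/λ₁) · v₁ is a global minimizer of f. -/
/-!
Writing `q = lᵀMl` and `t = ‖l‖²`, the Rayleigh bound gives `0 ≤ q ≤ λ₁ t`, so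
`f l ≥ (q + c)⁻¹ + γ₂ q / λ₁`. If `λ₁ ≤ γ₂ c²` this is at least `c⁻¹ = f 0`, since
`c⁻¹ - (q + c)⁻¹ ≤ q / c²`. Otherwise AM-GM in `u = q + c` bounds it below by
`2 √(γ₂ λ₁) / λ₁ - γ₂ c / λ₁`, and this value is attained along `v₁`, where both bounds are
equalities, at `u = √(λ₁ / γ₂)`.
-/

open Matrix

namespace Matrix

variable {ι : Type*} [Fintype ι] [DecidableEq ι]

theorem IsHermitian.posSemidef_smul_one_sub {M : Matrix ι ι ℝ} (hM : M.IsHermitian) {lam : ℝ}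
    (hlam : ∀ (μ : ℝ) (x : ι → ℝ), x ≠ 0 → M *ᵥ x = μ • x → μ ≤ lam) :
    (lam • (1 : Matrix ι ι ℝ) - M).PosSemidef := by
  have hN : (lam • (1 : Matrix ι ι ℝ) - M).IsHermitian := by
    simp only [IsHermitian, conjTranspose_sub, conjTranspose_smul, conjTranspose_one,
      star_trivial, hM.eq]
  refine hN.posSemidef_iff_eigenvalues_nonneg.mpr fun i => ?_
  set b : ι → ℝ := ⇑(hN.eigenvectorBasis i)
  have hb : b ≠ 0 := fun h =>
    hN.eigenvectorBasis.orthonormal.ne_zero i (by ext j; exact congrFun h j)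
  have hMb : M *ᵥ b = (lam - hN.eigenvalues i) • b := by
    have h := hN.mulVec_eigenvectorBasis i
    rw [sub_mulVec, smul_mulVec, one_mulVec] at h
    rw [sub_smul, ← h, sub_sub_cancel]
  rw [Pi.zero_apply]
  linarith [hlam _ b hb hMb]

theorem IsHermitian.dotProduct_mulVec_le {M : Matrix ι ι ℝ} (hM : M.IsHermitian) {lam : ℝ}
    (hlam : ∀ (μ : ℝ) (x : ι → ℝ), x ≠ 0 → M *ᵥ x = μ • x → μ ≤ lam) (x : ι → ℝ) :
    x ⬝ᵥ M *ᵥ x ≤ lam * (x ⬝ᵥ x) := by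
  have h := (hM.posSemidef_smul_one_sub hlam).dotProduct_mulVec_nonneg x
  simp only [star_trivial, sub_mulVec, smul_mulVec, one_mulVec, dotProduct_sub,
    dotProduct_smul, smul_eq_mul] at h
  linarith

end Matrix

section Scalar

variable {c γ lam q t : ℝ}

theorem inv_le_inv_add_mul_of_le_mul_sq (hc : 0 < c) (hq : 0 ≤ q) (ht : 0 ≤ t)
    (hqt : q ≤ lam * t) (hlam : lam ≤ γ * c ^ 2) : c⁻¹ ≤ (q + c)⁻¹ + γ * t := by
  have hdiff : c⁻¹ - (q + c)⁻¹ = q / (c * (q + c)) := by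
    field_simp
    ring
  have hbound : q / (c * (q + c)) ≤ γ * t := by
    rw [div_le_iff₀ (by positivity)]
    nlinarith [mul_le_mul_of_nonneg_right hlam ht]
  linarith

theorem two_mul_sqrt_div_le_inv_add_mul_div {u : ℝ} (hu : 0 < u) (hγ : 0 < γ) (hlam : 0 < lam) :
    2 * √(γ * lam) / lam ≤ u⁻¹ + γ * u / lam := by
  have hr : √(γ * lam) ^ 2 = γ * lam := Real.sq_sqrt (by positivity)
  have hamgm : 2 * √(γ * lam) * u ≤ lam + γ * u ^ 2 := by
    nlinarith [sq_nonneg (γ * u - √(γ * lam))]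
  rw [inv_eq_one_div, div_add_div _ _ hu.ne' hlam.ne', div_le_div_iff₀ hlam (by positivity)]
  nlinarith

theorem sub_le_inv_add_mul_of_le_mul (hc : 0 < c) (hγ : 0 < γ) (hlam : 0 < lam) (hq : 0 ≤ q)
    (hqt : q ≤ lam * t) : 2 * √(γ * lam) / lam - γ * c / lam ≤ (q + c)⁻¹ + γ * t := by
  have hamgm := two_mul_sqrt_div_le_inv_add_mul_div (u := q + c) (by linarith) hγ hlam
  have hqt' : γ * q / lam ≤ γ * t := by
    rw [div_le_iff₀ hlam]
    nlinarith
  have hsplit : γ * (q + c) / lam = γ * q / lam + γ * c / lam := by ring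
  linarith

theorem inv_add_mul_eq_at_critical_point (hγ : 0 < γ) (hlam : 0 < lam) :
    ((1 / √(γ * lam) - c / lam) * lam + c)⁻¹ + γ * (1 / √(γ * lam) - c / lam) =
      2 * √(γ * lam) / lam - γ * c / lam := by
  have hr : √(γ * lam) ^ 2 = γ * lam := Real.sq_sqrt (by positivity)
  have hr0 : 0 < √(γ * lam) := Real.sqrt_pos.mpr (by positivity)
  have hu : (1 / √(γ * lam) - c / lam) * lam + c = lam / √(γ * lam) := by
    field_simp
    ring
  have hγr : γ / √(γ * lam) = √(γ * lam) / lam := by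
    rw [div_eq_div_iff hr0.ne' hlam.ne']
    linarith
  rw [hu, inv_div, mul_sub, mul_one_div, hγr]
  ring

theorem div_le_one_div_sqrt_mul (hc : 0 < c) (hγ : 0 < γ) (hlam : γ * c ^ 2 ≤ lam) :
    c / lam ≤ 1 / √(γ * lam) := by
  have hlam0 : 0 < lam := lt_of_lt_of_le (by positivity) hlam
  have hr : √(γ * lam) ^ 2 = γ * lam := Real.sq_sqrt (by positivity)
  have hr0 : 0 < √(γ * lam) := Real.sqrt_pos.mpr (by positivity)
  have hrc : √(γ * lam) * c ≤ lam :=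
    le_of_pow_le_pow_left₀ two_ne_zero hlam0.le (by nlinarith)
  rw [div_le_div_iff₀ hlam0 hr0]
  linarith

end Scalar

theorem smul_eigenvector_quadratic_forms {ι : Type*} [Fintype ι] {M : Matrix ι ι ℝ} {lam : ℝ}
    {v : ι → ℝ} (hv : v ⬝ᵥ v = 1) (heig : M *ᵥ v = lam • v) {a : ℝ} (ha : 0 ≤ a) :
    (√a • v) ⬝ᵥ M *ᵥ (√a • v) = a * lam ∧ (√a • v) ⬝ᵥ (√a • v) = a := by
  have hsq : √a * √a = a := Real.mul_self_sqrt ha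
  simp only [mulVec_smul, heig, smul_smul, dotProduct_smul, smul_dotProduct, smul_eq_mul, hv,
    mul_one, hsq]
  exact ⟨by rw [mul_right_comm, hsq], trivial⟩

/-- global minimizers of `f(l) = (lᵀMl + c)⁻¹ + γ₂‖l‖²`. -/
theorem stmt_7 {n : ℕ} (M : Matrix (Fin n) (Fin n) ℝ) (hM : M.PosSemidef)
    (c γ₂ : ℝ) (hc : 0 < c) (hγ₂ : 0 < γ₂)
    (lam1 : ℝ) (v₁ : Fin n → ℝ) (hv₁ : v₁ ⬝ᵥ v₁ = 1)
    (heig : M.mulVec v₁ = lam1 • v₁)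
    (hlam1 : ∀ (μ : ℝ) (x : Fin n → ℝ), x ≠ 0 → M.mulVec x = μ • x → μ ≤ lam1)
    (f : (Fin n → ℝ) → ℝ)
    (hf : ∀ l, f l = (l ⬝ᵥ M.mulVec l + c)⁻¹ + γ₂ * (l ⬝ᵥ l)) :
    (lam1 ≤ γ₂ * c ^ 2 → ∀ l, f 0 ≤ f l) ∧
      (γ₂ * c ^ 2 < lam1 →
        ∀ l, f (Real.sqrt (1 / Real.sqrt (γ₂ * lam1) - c / lam1) • v₁) ≤ f l) := by
  have hq : ∀ l, 0 ≤ l ⬝ᵥ M *ᵥ l := fun l => by simpa using hM.dotProduct_mulVec_nonneg l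
  have hray : ∀ l, l ⬝ᵥ M *ᵥ l ≤ lam1 * (l ⬝ᵥ l) := hM.isHermitian.dotProduct_mulVec_le hlam1
  refine ⟨fun hsmall l => ?_, fun hlarge l => ?_⟩
  · have hf0 : f 0 = c⁻¹ := by simp [hf]
    rw [hf0, hf]
    exact inv_le_inv_add_mul_of_le_mul_sq hc (hq l) (dotProduct_self_star_nonneg l) (hray l)
      hsmall
  · have hlam0 : 0 < lam1 := lt_trans (by positivity) hlarge
    have hs := sub_nonneg.mpr (div_le_one_div_sqrt_mul hc hγ₂ hlarge.le)
    obtain ⟨hqs, hts⟩ := smul_eigenvector_quadratic_forms hv₁ heig hs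
    rw [hf, hf, hqs, hts, inv_add_mul_eq_at_critical_point hγ₂ hlam0]
    exact sub_le_inv_add_mul_of_le_mul hc hγ₂ hlam0 (hq l) (hray l)
end

section
/- Let R ∈ ℝ^{N×n}, b > 0, ε > 0, and let w ∈ ℝᴺ have i.i.d. Laplace(0, b) entries with b ≥ sup{‖R h − R h'‖₁ / ε : h, h' ∈ H, ‖h − h'‖₀ ≤ 1}, where H ⊆ ℝⁿ is compact. Suppose y = R h + w + e for a random vector e independent of w. Then for all Lebesgue-measurable Y ⊆ ℝᴺ and all h, h' ∈ H differing in at most one coordinate, P(y ∈ Y | h) ≤ exp(ε) · P(y ∈ Y | h'), i.e., the mechanism is ε-differentially private. -/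
/-!
Shifting the mean of a product Laplace(0, b) density by Δ changes the density by at most a factor
exp(‖Δ‖₁ / b), hence the noise law ν satisfies ν ≤ exp(‖Δ‖₁ / b) • (ν shifted by Δ). This
domination survives convolution with the independent law of e, and the law of R h + w + e is that
convolution translated by R h; taking Δ = R h' - R h, whose ℓ¹ norm is at most b ε, gives the claim.
-/

open Matrix MeasureTheory ProbabilityTheory

namespace MeasureTheory.Measure

variable {G : Type*} [MeasurableSpace G]

theorem withDensity_le_smul_map_add [AddGroup G] [MeasurableAdd G] {μ : Measure G}
    [μ.IsAddRightInvariant] {f : G → ENNReal} {C : ENNReal} (hC : C ≠ ⊤) {Δ : G}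
    (hf : ∀ x, f (x + Δ) ≤ C * f x) :
    μ.withDensity f ≤ C • (μ.withDensity f).map (· + Δ) := by
  refine Measure.le_iff.2 fun S hS => ?_
  rw [smul_apply, map_apply (measurable_add_const Δ) hS, withDensity_apply _ hS,
    withDensity_apply _ (hS.preimage (measurable_add_const Δ)), smul_eq_mul,
    ← lintegral_const_mul' _ _ hC,
    ← (measurePreserving_add_right μ Δ).setLIntegral_comp_preimage_emb
      (measurableEmbedding_addRight Δ)]
  exact lintegral_mono fun x => hf x

theorem conv_apply_eq_lintegral [AddMonoid G] [MeasurableAdd₂ G] {ν ρ : Measure G}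
    [SFinite ν] [SFinite ρ] {S : Set G} (hS : MeasurableSet S) :
    (ν ∗ ρ) S = ∫⁻ y, ν ((· + y) ⁻¹' S) ∂ρ := by
  rw [conv, map_apply measurable_add hS, prod_apply_symm (measurable_add hS)]
  rfl

theorem conv_le_smul_map_add [AddCommMonoid G] [MeasurableAdd₂ G] {ν ρ : Measure G}
    [SFinite ν] [SFinite ρ] {C : ENNReal} {Δ : G} (hν : ν ≤ C • ν.map (· + Δ)) :
    ν ∗ ρ ≤ C • (ν ∗ ρ).map (· + Δ) := by
  refine Measure.le_iff.2 fun S hS => ?_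
  have hSΔ : MeasurableSet ((· + Δ) ⁻¹' S) := hS.preimage (measurable_add_const Δ)
  have hslice : Measurable fun y => ν ((· + y) ⁻¹' ((· + Δ) ⁻¹' S)) :=
    measurable_measure_prodMk_right (measurable_add hSΔ)
  rw [smul_apply, map_apply (measurable_add_const Δ) hS, conv_apply_eq_lintegral hS,
    conv_apply_eq_lintegral hSΔ, smul_eq_mul, ← lintegral_const_mul _ hslice]
  refine lintegral_mono fun y => ?_
  have hy := Measure.le_iff.1 hν _ (hS.preimage (measurable_add_const y))
  rw [smul_apply, map_apply (measurable_add_const Δ) (hS.preimage (measurable_add_const y))] at hy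
  have hcomm : (· + y) ⁻¹' ((· + Δ) ⁻¹' S) = (· + Δ) ⁻¹' ((· + y) ⁻¹' S) := by
    ext x
    simp only [Set.mem_preimage, add_right_comm]
  rwa [hcomm]

end MeasureTheory.Measure

theorem ProbabilityTheory.IndepFun.measure_const_add_add_mem_le {Ω G : Type*}
    [MeasurableSpace Ω] {μ : Measure Ω} [IsFiniteMeasure μ] [AddCommGroup G] [MeasurableSpace G]
    [MeasurableAdd₂ G] {w e : Ω → G} (hw : Measurable w) (he : Measurable e)
    (hwe : IndepFun w e μ) {C : ENNReal} {a a' : G}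
    (hC : μ.map w ≤ C • (μ.map w).map (· + (a' - a))) {Y : Set G} (hY : MeasurableSet Y) :
    μ {ω | a + w ω + e ω ∈ Y} ≤ C * μ {ω | a' + w ω + e ω ∈ Y} := by
  have hmeas : ∀ c : G, MeasurableSet ((c + ·) ⁻¹' Y) :=
    fun c => hY.preimage (measurable_const_add c)
  have hlaw : ∀ c : G, μ {ω | c + w ω + e ω ∈ Y} = (μ.map w ∗ μ.map e) ((c + ·) ⁻¹' Y) := by
    intro c
    rw [← hwe.map_add_eq_map_conv_map hw he, Measure.map_apply (hw.add he) (hmeas c)]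
    simp only [Set.preimage, Pi.add_apply, add_assoc]
    rfl
  have hshift : (· + (a' - a)) ⁻¹' ((a + ·) ⁻¹' Y) = (a' + ·) ⁻¹' Y := by
    ext x
    simp only [Set.mem_preimage]
    rw [add_comm x, ← add_assoc, add_sub_cancel]
  have hconv := Measure.le_iff.1 (Measure.conv_le_smul_map_add (ρ := μ.map e) hC) _ (hmeas a)
  rwa [Measure.smul_apply, Measure.map_apply (measurable_add_const _) (hmeas a), hshift,
    ← hlaw, ← hlaw] at hconv

noncomputable def laplacePDFReal (b t : ℝ) : ℝ := (2 * b)⁻¹ * Real.exp (-|t| / b)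

theorem laplacePDFReal_nonneg {b : ℝ} (hb : 0 ≤ b) (t : ℝ) : 0 ≤ laplacePDFReal b t := by
  unfold laplacePDFReal
  positivity

theorem laplacePDFReal_add_le {b : ℝ} (hb : 0 < b) (t d : ℝ) :
    laplacePDFReal b (t + d) ≤ Real.exp (|d| / b) * laplacePDFReal b t := by
  have htri : |t| ≤ |t + d| + |d| := by simpa using abs_add_le (t + d) (-d)
  have hexp : -|t + d| / b ≤ |d| / b + -|t| / b := by
    rw [← add_div]
    gcongr
    linarith
  unfold laplacePDFReal
  rw [mul_left_comm, ← Real.exp_add]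
  gcongr

theorem prod_laplacePDFReal_add_le {ι : Type*} [Fintype ι] {b : ℝ} (hb : 0 < b) (x d : ι → ℝ) :
    ∏ i, laplacePDFReal b (x i + d i) ≤
      Real.exp ((∑ i, |d i|) / b) * ∏ i, laplacePDFReal b (x i) := by
  rw [Finset.sum_div, Real.exp_sum, ← Finset.prod_mul_distrib]
  exact Finset.prod_le_prod (fun i _ => laplacePDFReal_nonneg hb.le _)
    fun i _ => laplacePDFReal_add_le hb (x i) (d i)

theorem stmt_10_general {N n : ℕ} (R : Matrix (Fin N) (Fin n) ℝ)
    (b ε : ℝ) (hb : 0 < b) (hε : 0 < ε)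
    (H : Set (Fin n → ℝ))
    (hbsup : ∀ h h', h ∈ H → h' ∈ H → (∃ j, ∀ i, i ≠ j → h i = h' i) →
      (∑ i, |R.mulVec h i - R.mulVec h' i|) / ε ≤ b)
    {Ω : Type*} [MeasurableSpace Ω] (μ : Measure Ω) [IsProbabilityMeasure μ]
    (w e : Ω → Fin N → ℝ) (hwmeas : Measurable w) (hemeas : Measurable e)
    (hindep : IndepFun w e μ)
    (hwlaw : Measure.map w μ =
      volume.withDensity
        (fun x : Fin N → ℝ => ENNReal.ofReal (∏ i, (2 * b)⁻¹ * Real.exp (-|x i| / b)))) :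
    ∀ (Y : Set (Fin N → ℝ)), MeasurableSet Y →
      ∀ h h', h ∈ H → h' ∈ H → (∃ j, ∀ i, i ≠ j → h i = h' i) →
        μ {ω | R.mulVec h + w ω + e ω ∈ Y} ≤
          ENNReal.ofReal (Real.exp ε) * μ {ω | R.mulVec h' + w ω + e ω ∈ Y} := by
  intro Y hY h h' hh hh' hdiff
  have hsens : (∑ i, |(R *ᵥ h' - R *ᵥ h) i|) / b ≤ ε := by
    have hbound := hbsup h h' hh hh' hdiff
    rw [div_le_iff₀ hε] at hbound
    rw [div_le_iff₀ hb]
    simpa [abs_sub_comm, mul_comm] using hbound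
  refine hindep.measure_const_add_add_mem_le hwmeas hemeas ?_ hY
  rw [hwlaw]
  -- the density in `hwlaw` is `fun x => ENNReal.ofReal (∏ i, laplacePDFReal b (x i))`
  refine Measure.withDensity_le_smul_map_add ENNReal.ofReal_ne_top fun x => ?_
  have hpdf_nonneg : 0 ≤ ∏ i, laplacePDFReal b (x i) :=
    Finset.prod_nonneg fun i _ => laplacePDFReal_nonneg hb.le _
  rw [← ENNReal.ofReal_mul (Real.exp_nonneg ε)]
  exact ENNReal.ofReal_le_ofReal <| (prod_laplacePDFReal_add_le hb x _).trans <|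
    mul_le_mul_of_nonneg_right (Real.exp_le_exp.2 hsens) hpdf_nonneg

/-- the Laplace output-noise mechanism is ε-differentially private. -/
theorem stmt_10 {N n : ℕ} (hn : 0 < n) (R : Matrix (Fin N) (Fin n) ℝ)
    (b ε : ℝ) (hb : 0 < b) (hε : 0 < ε)
    (H : Set (Fin n → ℝ)) (hH : IsCompact H)
    (hbsup : ∀ h h', h ∈ H → h' ∈ H → (∃ j, ∀ i, i ≠ j → h i = h' i) →
      (∑ i, |R.mulVec h i - R.mulVec h' i|) / ε ≤ b)
    {Ω : Type*} [MeasurableSpace Ω] (μ : Measure Ω) [IsProbabilityMeasure μ]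
    (w e : Ω → Fin N → ℝ) (hwmeas : Measurable w) (hemeas : Measurable e)
    (hindep : IndepFun w e μ)
    (hwlaw : Measure.map w μ =
      volume.withDensity
        (fun x : Fin N → ℝ => ENNReal.ofReal (∏ i, (2 * b)⁻¹ * Real.exp (-|x i| / b)))) :
    ∀ (Y : Set (Fin N → ℝ)), MeasurableSet Y →
      ∀ h h', h ∈ H → h' ∈ H → (∃ j, ∀ i, i ≠ j → h i = h' i) →
        μ {ω | R.mulVec h + w ω + e ω ∈ Y} ≤
          ENNReal.ofReal (Real.exp ε) * μ {ω | R.mulVec h' + w ω + e ω ∈ Y} :=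
  stmt_10_general R b ε hb hε H hbsup μ w e hwmeas hemeas hindep hwlaw
end

section
/- Let w ∈ ℝᴺ have i.i.d. Laplace(0, b) entries with density (2b)⁻¹ exp(−|x|/b). Then for any fixed vectors a, a' ∈ ℝᴺ and any Lebesgue-measurable set Y ⊆ ℝᴺ, P(a + w ∈ Y) ≤ exp(‖a − a'‖₁ / b) · P(a' + w ∈ Y). -/
open MeasureTheory ENNReal

/-!
Lebesgue measure is translation invariant, so `P(a + w ∈ Y)` is the integral over
`{y | a' + y ∈ Y}` of the density translated by `a' - a`. The Laplace density satisfies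
`exp (-|x + c| / b) ≤ exp (|c| / b) * exp (-|x| / b)` by the triangle inequality, so the
translated product density is at most `exp (‖a - a'‖₁ / b)` times the original one.
-/

theorem MeasureTheory.Measure.withDensity_preimage_add_left_le {G : Type*} [MeasurableSpace G]
    [AddGroup G] [MeasurableAdd G] (μ : Measure G) [μ.IsAddLeftInvariant] {f : G → ℝ≥0∞}
    {a a' : G} {C : ℝ≥0∞} (hC : C ≠ ∞) (hf : ∀ y, f (-a + a' + y) ≤ C * f y)
    {s : Set G} (hs : MeasurableSet s) :
    μ.withDensity f ((a + ·) ⁻¹' s) ≤ C * μ.withDensity f ((a' + ·) ⁻¹' s) := by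
  have hpre : (-a + a' + ·) ⁻¹' ((a + ·) ⁻¹' s) = (a' + ·) ⁻¹' s := by
    ext y
    simp [← add_assoc]
  rw [withDensity_apply f (measurable_const_add a hs),
    withDensity_apply f (measurable_const_add a' hs),
    ← (measurePreserving_add_left μ (-a + a')).setLIntegral_comp_preimage_emb
      (measurableEmbedding_addLeft _) f, hpre, ← lintegral_const_mul' C f hC]
  exact lintegral_mono fun y => hf y

theorem Real.exp_neg_abs_add_div_le {b : ℝ} (hb : 0 ≤ b) (x c : ℝ) :
    Real.exp (-|c + x| / b) ≤ Real.exp (|c| / b) * Real.exp (-|x| / b) := by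
  have htri : |x| ≤ |c| + |c + x| := by simpa using abs_add_le (-c) (c + x)
  rw [← Real.exp_add, Real.exp_le_exp, ← add_div]
  gcongr
  linarith

theorem prod_laplace_density_add_le {ι : Type*} [Fintype ι] {b : ℝ} (hb : 0 ≤ b)
    (c y : ι → ℝ) :
    ∏ i, (2 * b)⁻¹ * Real.exp (-|(c + y) i| / b) ≤
      Real.exp ((∑ i, |c i|) / b) * ∏ i, (2 * b)⁻¹ * Real.exp (-|y i| / b) := by
  rw [Finset.sum_div, Real.exp_sum, ← Finset.prod_mul_distrib]
  refine Finset.prod_le_prod (fun i _ => by positivity) fun i _ => ?_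
  rw [mul_left_comm]
  gcongr
  exact Real.exp_neg_abs_add_div_le hb (y i) (c i)

/-- shift inequality for the i.i.d. Laplace product measure. -/
theorem stmt_11 {N : ℕ} (b : ℝ) (hb : 0 < b)
    (ν : Measure (Fin N → ℝ))
    (hν : ν = volume.withDensity
      (fun x : Fin N → ℝ => ENNReal.ofReal (∏ i, (2 * b)⁻¹ * Real.exp (-|x i| / b))))
    (a a' : Fin N → ℝ) (Y : Set (Fin N → ℝ)) (hY : MeasurableSet Y) :
    ν {x | a + x ∈ Y} ≤
      ENNReal.ofReal (Real.exp ((∑ i, |a i - a' i|) / b)) * ν {x | a' + x ∈ Y} := by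
  subst hν
  refine volume.withDensity_preimage_add_left_le ofReal_ne_top (fun y => ?_) hY
  rw [← ENNReal.ofReal_mul (Real.exp_nonneg _)]
  refine ENNReal.ofReal_le_ofReal ?_
  have hc : ∀ i, |(-a + a') i| = |a i - a' i| := fun i => by
    rw [Pi.add_apply, Pi.neg_apply, neg_add_eq_sub, abs_sub_comm]
  simpa only [hc] using prod_laplace_density_add_le hb.le (-a + a') y
end
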